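/- arXiv:1302.7028 — 3 statements merged into one kernel-verified Lean document; each statement's English description precedes it below -/
import Mathlib

section
/- For any edge e = st in a graph G with positive edge weights, fix for each pair of vertices i,j a shortest path P_{ij}. Then the graph H on V(G) whose edges are the pairs {i,j} such that P_{ij} uses the edge e is bipartite. -/
/-!
Colour a vertex `x` by the endpoint of `e = st` it is strictly closer to. A shortest `i`-`j` path
entering `e` at `s` and leaving at `t` has length `dist i s + w + dist t j`; comparing it with the
detours `i → t → j` and `i → s → j` (and using `w > 0`) shows that `i` is strictly closer to `s`
and `j` strictly closer to `t`. Hence every edge of `H` joins the two colour classes.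
-/

namespace SimpleGraph

variable {V : Type*} {r : V → V → Prop} {s t : Set V}

theorem isBipartiteWith_fromRel (hdisj : Disjoint s t)
    (hr : ∀ i j, r i j → i ∈ s ∧ j ∈ t ∨ i ∈ t ∧ j ∈ s) :
    (fromRel r).IsBipartiteWith s t where
  disjoint := hdisj
  mem_of_adj := by
    rintro i j ⟨-, hij | hji⟩
    · exact hr i j hij
    · exact (hr j i hji).symm.imp And.symm And.symm

end SimpleGraph

section ShortestPathThroughEdge

variable {V : Type*} {dist : V → V → ℝ} {i j s t : V} {w : ℝ}

theorem dist_lt_of_eq_add_add_left (htri : ∀ x y z, dist x z ≤ dist x y + dist y z)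
    (hw : 0 < w) (h : dist i s + w + dist t j = dist i j) : dist i s < dist i t := by
  linarith [htri i t j]

theorem dist_lt_of_eq_add_add_right (htri : ∀ x y z, dist x z ≤ dist x y + dist y z)
    (hw : 0 < w) (h : dist i s + w + dist t j = dist i j) : dist t j < dist s j := by
  linarith [htri i s j]

theorem dist_lt_and_dist_lt_of_eq_add_add (hsymm : ∀ x y, dist x y = dist y x)
    (htri : ∀ x y z, dist x z ≤ dist x y + dist y z) (hw : 0 < w)
    (h : dist i s + w + dist t j = dist i j) : dist i s < dist i t ∧ dist j t < dist j s := by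
  refine ⟨dist_lt_of_eq_add_add_left htri hw h, ?_⟩
  simpa only [hsymm j] using dist_lt_of_eq_add_add_right htri hw h

end ShortestPathThroughEdge

theorem shortest_path_edge_graph_bipartite_general {V : Type*}
    (dist : V → V → ℝ)
    (hsymm : ∀ x y, dist x y = dist y x)
    (htri : ∀ x y z, dist x z ≤ dist x y + dist y z)
    (s t : V) (w : ℝ) (hw : 0 < w)
    (uses : V → V → Prop)
    (huses : ∀ i j, uses i j →
      dist i s + w + dist t j = dist i j ∨ dist i t + w + dist s j = dist i j) :
    (SimpleGraph.fromRel uses).Colorable 2 := by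
  have hdisj : Disjoint {x | dist x s < dist x t} {x | dist x t < dist x s} :=
    Set.disjoint_left.2 fun _ hs ht => lt_asymm (α := ℝ) hs ht
  refine (SimpleGraph.isBipartiteWith_fromRel hdisj fun i j hij => ?_).isBipartite
  rcases huses i j hij with hst | hts
  · exact .inl (dist_lt_and_dist_lt_of_eq_add_add hsymm htri hw hst)
  · exact .inr (dist_lt_and_dist_lt_of_eq_add_add hsymm htri hw hts)

/-- Fix an edge `e = st` of weight `w > 0` in a positively weighted graph, with
shortest-path distance `dist` (symmetric, satisfying the triangle inequality, and
with `dist s t ≤ w` since `st` is an edge).  For each pair `i, j` a fixed shortest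
`i`-`j` path `P i j` either avoids `e` or traverses it in one of the two directions,
in which case its length decomposes as `dist i s + w + dist t j` (resp. the
reverse); `uses i j` records that `P i j` uses `e`.  Then the graph `H` on the
vertices whose edges are the pairs `{i,j}` with `e ∈ P i j` is bipartite. -/
theorem shortest_path_edge_graph_bipartite {V : Type*}
    (dist : V → V → ℝ)
    (hsymm : ∀ x y, dist x y = dist y x)
    (htri : ∀ x y z, dist x z ≤ dist x y + dist y z)
    (s t : V) (w : ℝ) (hw : 0 < w) (hst : dist s t ≤ w)
    (uses : V → V → Prop)
    (huses : ∀ i j, uses i j →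
      dist i s + w + dist t j = dist i j ∨ dist i t + w + dist s j = dist i j) :
    (SimpleGraph.fromRel uses).Colorable 2 :=
  shortest_path_edge_graph_bipartite_general dist hsymm htri s t w hw uses huses
end

section
/- Let T be a tree whose leaves are the vertices of a d-regular graph G on n vertices that is an α-edge-expander, and let c be a leaf-center of T. Then the number of edges of G whose endpoints lie in different components of T \ {c} is at least αn/2. -/
/-!
The components of `T \ {c}` partition `V(G)` into parts of size at most `n/2`,
so by expansion each part `P` has at least `α |P|` boundary edges; summing over the parts gives
at least `α n` boundary incidences. A separated edge `xy` lies in the boundary of only the two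
parts containing `x` and `y`, so it is counted at most twice.
-/

open Finset

namespace Finset

theorem sum_card_le_card_mul_of_forall_card_filter_le {α ι : Type*} [DecidableEq α]
    {s : Finset α} {K : Finset ι} {B : ι → Finset α} {n : ℕ} (hB : ∀ k ∈ K, B k ⊆ s)
    (h : ∀ a ∈ s, #{k ∈ K | a ∈ B k} ≤ n) : ∑ k ∈ K, #(B k) ≤ #s * n := by
  calc ∑ k ∈ K, #(B k) = ∑ k ∈ K, #(s ∩ B k) :=
        sum_congr rfl fun k hk => by rw [inter_eq_right.mpr (hB k hk)]
    _ = ∑ a ∈ s, #{k ∈ K | a ∈ B k} := by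
        simp_rw [← filter_mem_eq_inter, card_eq_sum_ones, sum_filter]
        exact sum_comm
    _ ≤ #s * n := s.sum_le_card_nsmul _ _ h

theorem sum_ncard_fiber_eq_card {V ι : Type*} [Fintype V] [DecidableEq ι] (f : V → ι) :
    ∑ k ∈ univ.image f, {v | f v = k}.ncard = Fintype.card V := by
  classical
  simp_rw [Set.ncard_eq_toFinset_card', Set.toFinset_ofPred]
  exact (card_eq_sum_card_image f univ).symm

end Finset

namespace SimpleGraph

variable {V ι : Type*} (G : SimpleGraph V)

def edgeBoundary (S : Set V) : Set (Sym2 V) :=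
  {e | e ∈ G.edgeSet ∧ ∃ x ∈ S, ∃ y ∈ Sᶜ, e = s(x, y)}

def crossingEdges (f : V → ι) : Set (Sym2 V) :=
  {e | e ∈ G.edgeSet ∧ ∀ x y, e = s(x, y) → f x ≠ f y}

variable {G}

theorem eq_or_eq_of_mem_edgeBoundary_fiber {f : V → ι} {x y : V} {k : ι}
    (h : s(x, y) ∈ G.edgeBoundary {v | f v = k}) : k = f x ∨ k = f y := by
  obtain ⟨-, x', hx', y', -, hxy⟩ := h
  rcases Sym2.eq_iff.mp hxy with ⟨rfl, -⟩ | ⟨-, rfl⟩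
  · exact .inl hx'.symm
  · exact .inr hx'.symm

variable (G)

theorem edgeBoundary_fiber_subset_crossingEdges (f : V → ι) (k : ι) :
    G.edgeBoundary {v | f v = k} ⊆ G.crossingEdges f := by
  rintro _ ⟨hadj, x, hx, y, hy, rfl⟩
  refine ⟨hadj, fun x' y' hxy => ?_⟩
  rcases Sym2.eq_iff.mp hxy with ⟨rfl, rfl⟩ | ⟨rfl, rfl⟩
  · exact fun h => hy (h.symm.trans hx)
  · exact fun h => hy (h.trans hx)

theorem sum_ncard_edgeBoundary_fiber_le [Fintype V] [DecidableEq ι] (f : V → ι) :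
    ∑ k ∈ univ.image f, (G.edgeBoundary {v | f v = k}).ncard ≤ 2 * (G.crossingEdges f).ncard := by
  classical
  simp_rw [Set.ncard_eq_toFinset_card', mul_comm 2]
  refine sum_card_le_card_mul_of_forall_card_filter_le
    (fun k _ => Set.toFinset_subset_toFinset.mpr (G.edgeBoundary_fiber_subset_crossingEdges f k))
    fun e _ => ?_
  induction e with
  | h x y =>
    calc #{k ∈ univ.image f | s(x, y) ∈ (G.edgeBoundary {v | f v = k}).toFinset}
        ≤ #{f x, f y} := card_le_card fun k hk => by
          simpa using eq_or_eq_of_mem_edgeBoundary_fiber (Set.mem_toFinset.mp (mem_filter.mp hk).2)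
      _ ≤ 2 := card_le_two

end SimpleGraph

theorem separated_edges_lower_bound_general {V : Type*} [Fintype V]
    (G : SimpleGraph V)
    (n : ℕ) (hn : n = Fintype.card V) (α : ℝ)
    (hexp : ∀ S : Set V, 2 * S.ncard ≤ n →
      α * S.ncard ≤ ({e | e ∈ G.edgeSet ∧ ∃ x ∈ S, ∃ y ∈ Sᶜ, e = s(x, y)} : Set (Sym2 V)).ncard)
    {ι : Type*} (comp : V → ι)
    (hcenter : ∀ k : ι, 2 * {v | comp v = k}.ncard ≤ n) :
    α * n / 2 ≤
      ({e | e ∈ G.edgeSet ∧ ∀ x y, e = s(x, y) → comp x ≠ comp y} : Set (Sym2 V)).ncard := by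
  classical
  have hcount : ((∑ k ∈ univ.image comp, (G.edgeBoundary {v | comp v = k}).ncard : ℕ) : ℝ) ≤
      2 * (G.crossingEdges comp).ncard := by
    exact_mod_cast G.sum_ncard_edgeBoundary_fiber_le comp
  calc α * n / 2 = (∑ k ∈ univ.image comp, α * {v | comp v = k}.ncard) / 2 := by
        rw [← mul_sum, ← Nat.cast_sum, sum_ncard_fiber_eq_card, hn]
    _ ≤ (∑ k ∈ univ.image comp, (G.edgeBoundary {v | comp v = k}).ncard : ℕ) / 2 := by
        push_cast
        gcongr with k
        exact hexp _ (hcenter k)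
    _ ≤ (G.crossingEdges comp).ncard := by linarith

/-- Let `G` be a `d`-regular `α`-edge-expander on `n` vertices and let `T` be a
tree whose leaves are the vertices of `G`, with leaf-center `c`.  The components
of `T \ {c}` induce a partition of the vertices of `G`, recorded by `comp`, in
which every part contains at most `n/2` vertices (the leaf-center property).
Then the number of edges of `G` whose endpoints lie in different components is
at least `α n / 2`. -/
theorem separated_edges_lower_bound {V : Type*} [Fintype V]
    (G : SimpleGraph V) (d : ℕ) (hreg : ∀ w, (G.neighborSet w).ncard = d)
    (n : ℕ) (hn : n = Fintype.card V) (α : ℝ) (hα : 0 < α)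
    (hexp : ∀ S : Set V, 2 * S.ncard ≤ n →
      α * S.ncard ≤ ({e | e ∈ G.edgeSet ∧ ∃ x ∈ S, ∃ y ∈ Sᶜ, e = s(x, y)} : Set (Sym2 V)).ncard)
    {ι : Type*} (comp : V → ι)
    (hcenter : ∀ k : ι, 2 * {v | comp v = k}.ncard ≤ n) :
    α * n / 2 ≤
      ({e | e ∈ G.edgeSet ∧ ∀ x y, e = s(x, y) → comp x ≠ comp y} : Set (Sym2 V)).ncard :=
  separated_edges_lower_bound_general G n hn α hexp comp hcenter
end

section
/- For every instance of robust network design, the optimal cost restricted to hierarchical hub templates is at most the optimal cost restricted to tree templates: RND_HH(G,c,D) ≤ RND_TR(G,c,D). -/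
/-! Attach to every node `v` of the routing tree a pendant leaf `v'`, and send both `v` and `v'` to
`v`. This is a tree whose leaves are exactly the new vertices. The fundamental cut of an old edge
separates the same terminals as in the routing tree, and a pendant edge costs nothing because both
its ends go to the same node, so the hub template costs exactly as much as the tree template. -/

/-- `sep T x y a b` means the tree edge `xy` lies on the (unique) path between
`a` and `b` in `T`. -/
def sep {W : Type*} (T : SimpleGraph W) (x y a b : W) : Prop :=
  ∃ p : T.Walk a b, p.IsPath ∧ s(x, y) ∈ p.edges

open Classical in
/-- `cutLoad 𝒟 T ι x y = u_{𝒟,T}(xy)`: the maximum, over demand matrices in the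
universe `𝒟`, of the total demand separated by the fundamental cut of the tree
edge `xy` (terminals embedded via `ι`). -/
noncomputable def cutLoad {V W : Type*} [Fintype V] (𝒟 : Set (V → V → ℝ))
    (T : SimpleGraph W) (ι : V → W) (x y : W) : ℝ :=
  sSup {z | ∃ D ∈ 𝒟, z = ∑ i, ∑ j, if sep T x y (ι i) (ι j) then D i j else 0}

open Classical in
/-- The cost of the hierarchical hub template given by hub tree `T` and hub map
`η`: `∑_{e = xy ∈ T} u_{𝒟,T}(e) · dist_G(η x, η y)` (each edge counted once,
whence the factor `1/2`). -/
noncomputable def hhCost {V W : Type*} [Fintype V] [Fintype W]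
    (𝒟 : Set (V → V → ℝ)) (T : SimpleGraph W) (ι : V → W) (dG : V → V → ℝ)
    (η : W → V) : ℝ :=
  (1 / 2) * ∑ x, ∑ y,
    if T.Adj x y then cutLoad 𝒟 T ι x y * dG (η x) (η y) else 0

namespace SimpleGraph

variable {V : Type*}

def attachLeaves (G : SimpleGraph V) : SimpleGraph (V ⊕ V) where
  Adj
    | .inl a, .inl b => G.Adj a b
    | .inl a, .inr b | .inr a, .inl b => a = b
    | .inr _, .inr _ => False
  symm := ⟨by rintro (a | a) (b | b) h <;> first | exact G.symm h | exact h.symm | exact h⟩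
  loopless := ⟨by rintro (a | a) h <;> simp_all⟩

variable {G : SimpleGraph V} {a b : V}

@[simp] lemma attachLeaves_adj_inl_inl : G.attachLeaves.Adj (.inl a) (.inl b) ↔ G.Adj a b := .rfl
@[simp] lemma attachLeaves_adj_inl_inr : G.attachLeaves.Adj (.inl a) (.inr b) ↔ a = b := .rfl
@[simp] lemma attachLeaves_adj_inr_inl : G.attachLeaves.Adj (.inr a) (.inl b) ↔ a = b := .rfl
@[simp] lemma not_attachLeaves_adj_inr_inr : ¬ G.attachLeaves.Adj (.inr a) (.inr b) := id

-- Reducible, so that `⇑G.toAttachLeaves a` and `Sum.inl a` agree when walks built with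
-- `Walk.map` are extended by pendant edges.
abbrev toAttachLeaves (G : SimpleGraph V) : G →g G.attachLeaves := ⟨Sum.inl, id⟩

lemma toAttachLeaves_injective : Function.Injective (toAttachLeaves G) := Sum.inl_injective

lemma edgeSet_attachLeaves : G.attachLeaves.edgeSet =
    Sym2.map Sum.inl '' G.edgeSet ∪ Set.range fun v => s(Sum.inl v, Sum.inr v) := by
  ext e
  induction e using Sym2.ind with
  | h x y =>
    rcases x with a | a <;> rcases y with b | b <;> simp [Sym2.exists, eq_comm]
    exact ⟨fun h => ⟨a, b, h, .inl ⟨rfl, rfl⟩⟩,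
      by rintro ⟨x, y, h, ⟨rfl, rfl⟩ | ⟨rfl, rfl⟩⟩ <;> simp [h, h.symm]⟩

lemma Connected.attachLeaves (hG : G.Connected) : G.attachLeaves.Connected := by
  have : Nonempty V := hG.nonempty
  have inl_reach (a b : V) : G.attachLeaves.Reachable (.inl a) (.inl b) :=
    (hG.preconnected a b).map (toAttachLeaves G)
  have inr_reach (a : V) : G.attachLeaves.Reachable (.inr a) (.inl a) :=
    (attachLeaves_adj_inr_inl.2 rfl).reachable
  refine ⟨?_⟩
  rintro (a | a) (b | b)
  · exact inl_reach a b
  · exact (inl_reach a b).trans (inr_reach b).symm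
  · exact (inr_reach a).trans (inl_reach a b)
  · exact (inr_reach a).trans ((inl_reach a b).trans (inr_reach b).symm)

lemma IsTree.attachLeaves [Finite V] (hG : G.IsTree) : G.attachLeaves.IsTree := by
  rw [isTree_iff_connected_and_card] at hG ⊢
  refine ⟨hG.1.attachLeaves, ?_⟩
  have hdisj : Disjoint (Sym2.map Sum.inl '' G.edgeSet)
      (Set.range fun v : V => s(Sum.inl v, (Sum.inr v : V ⊕ V))) := by
    refine Set.disjoint_left.2 ?_
    rintro _ ⟨e, -, rfl⟩ ⟨v, hv⟩
    induction e using Sym2.ind with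
    | h x y => simp at hv
  rw [Nat.card_sum, ← hG.2, Nat.card_coe_set_eq, edgeSet_attachLeaves,
    Set.ncard_union_eq hdisj, Set.ncard_image_of_injective _ (Sym2.map.injective Sum.inl_injective),
    Set.ncard_range_of_injective (fun a b h => by simpa using h), ← Nat.card_coe_set_eq]
  omega

lemma IsTree.sep_iff_mem_edges {W : Type*} {T : SimpleGraph W} (hT : T.IsTree) {x y a b : W}
    {p : T.Walk a b} (hp : p.IsPath) : sep T x y a b ↔ s(x, y) ∈ p.edges :=
  ⟨fun ⟨_, hq, he⟩ => (hT.existsUnique_path a b).unique hq hp ▸ he, fun he => ⟨p, hp, he⟩⟩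

lemma sep_attachLeaves_inr_iff [Finite V] (hG : G.IsTree) (x y i j : V) :
    sep G.attachLeaves (.inl x) (.inl y) (.inr i) (.inr j) ↔ sep G x y i j := by
  by_cases hij : i = j
  · subst hij
    rw [hG.sep_iff_mem_edges .nil, hG.attachLeaves.sep_iff_mem_edges .nil]
    simp only [Walk.edges_nil, List.not_mem_nil]
  obtain ⟨p, hp, -⟩ := hG.existsUnique_path i j
  have hq : (((p.map (toAttachLeaves G)).concat (attachLeaves_adj_inl_inr.2 rfl)).cons
      (attachLeaves_adj_inr_inl.2 rfl)).IsPath := by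
    refine ((hp.map toAttachLeaves_injective).concat ?_ _).cons ?_ <;>
      simp [Walk.support_map, Walk.support_concat, toAttachLeaves, hij]
  rw [hG.sep_iff_mem_edges hp, hG.attachLeaves.sep_iff_mem_edges hq]
  have hxy : s(Sum.inl x, Sum.inl y) = Sym2.map (toAttachLeaves G) s(x, y) := rfl
  rw [Walk.edges_cons, Walk.edges_concat, List.mem_cons, List.concat_eq_append, List.mem_append,
    Walk.edges_map, hxy, List.mem_map_of_injective (Sym2.map.injective toAttachLeaves_injective)]
  simp

lemma attachLeaves_neighborSet_inr (a : V) : G.attachLeaves.neighborSet (.inr a) = {.inl a} := by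
  ext (b | b) <;> simp [eq_comm]

lemma exists_inr_eq_iff_ncard_neighborSet_attachLeaves [Finite V] (hG : ∀ a, ∃ b, G.Adj a b)
    (x : V ⊕ V) : (∃ v, Sum.inr v = x) ↔ (G.attachLeaves.neighborSet x).ncard = 1 := by
  rcases x with a | a
  · obtain ⟨b, hab⟩ := hG a
    have : 1 < (G.attachLeaves.neighborSet (.inl a)).ncard :=
      (Set.one_lt_ncard (Set.toFinite _)).2 ⟨.inl b, hab, .inr a, rfl, by simp⟩
    simp [this.ne']
  · simp [attachLeaves_neighborSet_inr]

end SimpleGraph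

open SimpleGraph

lemma cutLoad_congr {V W W' : Type*} [Fintype V] (𝒟 : Set (V → V → ℝ)) {T : SimpleGraph W}
    {T' : SimpleGraph W'} {ι : V → W} {ι' : V → W'} {x y : W} {x' y' : W'}
    (h : ∀ i j, sep T x y (ι i) (ι j) ↔ sep T' x' y' (ι' i) (ι' j)) :
    cutLoad 𝒟 T ι x y = cutLoad 𝒟 T' ι' x' y' := by
  classical
  simp only [cutLoad, h]

lemma hhCost_attachLeaves {V : Type*} [Fintype V] (𝒟 : Set (V → V → ℝ)) {G : SimpleGraph V}
    (hG : G.IsTree) {dG : V → V → ℝ} (hdG : ∀ v, dG v v = 0) :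
    hhCost 𝒟 G.attachLeaves Sum.inr dG (Sum.elim id id) = hhCost 𝒟 G id dG id := by
  have hcut (x y : V) : cutLoad 𝒟 G.attachLeaves Sum.inr (.inl x) (.inl y) = cutLoad 𝒟 G id x y :=
    cutLoad_congr 𝒟 (sep_attachLeaves_inr_iff hG x y)
  classical
  simp [hhCost, Fintype.sum_sum_type, hcut, hdG]

/-- `RND_HH ≤ RND_TR`: for every tree-routing template, given by a tree `Ttr`
on the nodes of the network (in its metric completion, with distances `dG`,
`dG v v = 0`), there is a hierarchical hub template — a hub tree `T` whose
leaves (degree-one vertices) are exactly the terminals `V`, embedded via `ι`,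
together with a hub map `η` fixing the terminals — whose cost is at most the
cost of the tree template (the latter being the hub-tree cost of `Ttr` routed
by the identity). -/
theorem rnd_hh_le_rnd_tr {V : Type} [Fintype V] (hV : 2 ≤ Fintype.card V)
    (dG : V → V → ℝ) (hdG : ∀ v, dG v v = 0)
    (𝒟 : Set (V → V → ℝ)) (Ttr : SimpleGraph V) (hTtr : Ttr.IsTree) :
    ∃ (W : Type) (_ : Fintype W) (T : SimpleGraph W) (ι : V → W) (η : W → V),
      T.IsTree ∧ Function.Injective ι ∧
      (∀ x : W, (∃ v, ι v = x) ↔ (T.neighborSet x).ncard = 1) ∧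
      (∀ v, η (ι v) = v) ∧
      hhCost 𝒟 T ι dG η ≤ hhCost 𝒟 Ttr id dG id := by
  have : Nontrivial V := Fintype.one_lt_card_iff_nontrivial.1 hV
  exact ⟨V ⊕ V, inferInstance, Ttr.attachLeaves, Sum.inr, Sum.elim id id, hTtr.attachLeaves,
    Sum.inr_injective,
    exists_inr_eq_iff_ncard_neighborSet_attachLeaves
      hTtr.connected.preconnected.exists_adj_of_nontrivial,
    fun _ => rfl, (hhCost_attachLeaves 𝒟 hTtr hdG).le⟩
end
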